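/- arXiv:2512.07003 — 2 statements merged into one kernel-verified Lean document; each statement's English description precedes it below -/
import Mathlib

section
/- Let X be uniformly distributed on the unit simplex in R^n. Then for every x ∈ R, P[n · max_i X_i ≤ x + ln n] → exp(−e^{−x}) as n → ∞ (Gumbel limit for the maximum coordinate). -/
/-!
For `t ≥ 0` the part of the simplex `Δ ⊂ ℝⁿ` where `t ≤ y i` for all `i ∈ S` is a translate of
`(1 - #S t) • Δ`, so it carries the fraction `(1 - #S t)₊ ^ (n - 1)` of the `(n - 1)`-dimensional
Hausdorff measure of `Δ`. Inclusion–exclusion over the events `t < y i` then gives the exact law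
`P[max_i X_i ≤ t] = ∑ₖ (-1)ᵏ (n choose k) (1 - k t)₊ ^ (n - 1)`.
For `t = (x + log n) / n` the `k`-th term tends to `e^{-kx} / k!` and is bounded by
`e^{(2|x| + 1) k} / k!`, so by Tannery's theorem the sum tends to
`∑ₖ (-e^{-x})ᵏ / k! = exp (-e^{-x})`.
-/

open MeasureTheory ProbabilityTheory

/-- The uniform probability distribution on the unit simplex
`Δ^n = {x ∈ [0,∞)^n : x_1 + ... + x_n = 1}`, i.e. normalized `(n-1)`-dimensional
Hausdorff (surface) measure on the simplex; equivalently `Dirichlet(1,...,1)`. -/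
noncomputable def simplexUniform (n : ℕ) : Measure (Fin n → ℝ) :=
  (μH[(n : ℝ) - 1] {x : Fin n → ℝ | (∀ i, 0 ≤ x i) ∧ ∑ i, x i = 1})⁻¹ •
    (μH[(n : ℝ) - 1]).restrict {x : Fin n → ℝ | (∀ i, 0 ≤ x i) ∧ ∑ i, x i = 1}

open Filter Topology Real Finset
open scoped Pointwise NNReal ENNReal

lemma hausdorffMeasure_add_smul_image {E : Type*} [NormedAddCommGroup E] [NormedSpace ℝ E]
    [MeasurableSpace E] [BorelSpace E] {d : ℝ} (hd : 0 ≤ d) (v : E) {r : ℝ} (hr : 0 < r)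
    (A : Set E) :
    μH[d] ((fun z => v + r • z) '' A) = ENNReal.ofReal (r ^ d) * μH[d] A := by
  have himg : (fun z => v + r • z) '' A = v +ᵥ r • A := by
    rw [← Set.image_smul, ← Set.image_vadd, Set.image_image]
    rfl
  rw [himg, hausdorffMeasure_vadd _ (Or.inl hd), Measure.hausdorffMeasure_smul₀ hd hr.ne',
    ENNReal.smul_def, smul_eq_mul, Real.nnnorm_of_nonneg hr.le,
    ← ENNReal.ofReal_rpow_of_nonneg hr.le hd, ENNReal.coe_rpow_of_nonneg _ hd, ENNReal.ofReal,
    Real.toNNReal_of_nonneg hr.le]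

section Simplex

variable {ι : Type*} [Fintype ι]

lemma stdSimplex_inter_forall_le_eq_image [DecidableEq ι] (S : Finset ι) {s : ℝ} (hs : 0 ≤ s)
    (hr : 0 < 1 - #S * s) :
    stdSimplex ℝ ι ∩ {y | ∀ i ∈ S, s ≤ y i} =
      (fun z => (fun i => if i ∈ S then s else 0) + (1 - #S * s) • z) '' stdSimplex ℝ ι := by
  set r := 1 - #S * s
  have hsum : ∑ i, (if i ∈ S then s else 0) = #S * s := by
    rw [sum_ite_mem, univ_inter, sum_const, nsmul_eq_mul]
  ext y
  constructor
  · rintro ⟨⟨hy0, hy1⟩, hyS⟩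
    refine ⟨fun i => (y i - if i ∈ S then s else 0) / r, ⟨fun i => ?_, ?_⟩, ?_⟩
    · refine div_nonneg ?_ hr.le
      split_ifs with hi
      · linarith [hyS i hi]
      · linarith [hy0 i]
    · rw [← sum_div, sum_sub_distrib, hy1, hsum, div_self hr.ne']
    · funext i
      simp only [Pi.add_apply, Pi.smul_apply, smul_eq_mul]
      field_simp
      ring
  · rintro ⟨z, ⟨hz0, hz1⟩, rfl⟩
    have hrz : ∀ i, 0 ≤ r * z i := fun i => mul_nonneg hr.le (hz0 i)
    refine ⟨⟨fun i => ?_, ?_⟩, fun i hi => ?_⟩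
    · simp only [Pi.add_apply, Pi.smul_apply, smul_eq_mul]
      split_ifs <;> linarith [hrz i]
    · simp only [Pi.add_apply, Pi.smul_apply, smul_eq_mul]
      rw [sum_add_distrib, hsum, ← mul_sum, hz1]
      ring
    · simp only [Pi.add_apply, Pi.smul_apply, smul_eq_mul, if_pos hi]
      linarith [hrz i]

lemma hausdorffMeasure_stdSimplex_inter_forall_le {d : ℝ} (hd : 0 ≤ d) (S : Finset ι) {s : ℝ}
    (hs : 0 ≤ s) (hr : 0 < 1 - #S * s) :
    μH[d] (stdSimplex ℝ ι ∩ {y | ∀ i ∈ S, s ≤ y i}) =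
      ENNReal.ofReal ((1 - #S * s) ^ d) * μH[d] (stdSimplex ℝ ι) := by
  classical
  rw [stdSimplex_inter_forall_le_eq_image S hs hr, hausdorffMeasure_add_smul_image hd _ hr]

lemma stdSimplex_inter_forall_lt_eq_empty (S : Finset ι) {t : ℝ} (h : 1 ≤ #S * t) :
    stdSimplex ℝ ι ∩ {y | ∀ i ∈ S, t < y i} = ∅ := by
  refine Set.eq_empty_of_forall_notMem fun y ⟨⟨hy0, hy1⟩, hyS⟩ => ?_
  have hS : S.Nonempty := nonempty_iff_ne_empty.2 fun hS => by norm_num [hS] at h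
  have hlt : #S * t < ∑ i ∈ S, y i := by
    simpa using sum_lt_sum_of_nonempty hS hyS
  have hle : ∑ i ∈ S, y i ≤ ∑ i, y i := sum_le_sum_of_subset_of_nonneg (subset_univ S)
    fun i _ _ => hy0 i
  linarith

/- Rather than proving the faces `{y i = t}` null, squeeze the open set between the closed sets
for `t` and for `s ↓ t`, whose measures are continuous in `s`. -/
lemma hausdorffMeasure_stdSimplex_inter_forall_lt {d : ℝ} (hd : 0 < d) (S : Finset ι) {t : ℝ}
    (ht : 0 ≤ t) :
    μH[d] (stdSimplex ℝ ι ∩ {y | ∀ i ∈ S, t < y i}) =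
      ENNReal.ofReal (max (1 - #S * t) 0 ^ d) * μH[d] (stdSimplex ℝ ι) := by
  rcases le_or_gt (1 - #S * t) 0 with hr | hr
  · rw [stdSimplex_inter_forall_lt_eq_empty S (by linarith), max_eq_right hr,
      zero_rpow hd.ne', ENNReal.ofReal_zero, zero_mul, measure_empty]
  rw [max_eq_left hr.le]
  refine le_antisymm ?_ ?_
  · rw [← hausdorffMeasure_stdSimplex_inter_forall_le hd.le S ht hr]
    exact measure_mono fun y ⟨hy, hyS⟩ => ⟨hy, fun i hi => (hyS i hi).le⟩
  have hlin : Tendsto (fun s : ℝ => 1 - #S * s) (𝓝[>] t) (𝓝 (1 - #S * t)) :=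
    ((continuous_const.sub (continuous_const.mul continuous_id)).tendsto t).mono_left
      nhdsWithin_le_nhds
  have hlim : Tendsto (fun s : ℝ => ENNReal.ofReal ((1 - #S * s) ^ d) * μH[d] (stdSimplex ℝ ι))
      (𝓝[>] t) (𝓝 (ENNReal.ofReal ((1 - #S * t) ^ d) * μH[d] (stdSimplex ℝ ι))) :=
    ENNReal.Tendsto.mul_const ((ENNReal.continuous_ofReal.tendsto _).comp
      (hlin.rpow_const (Or.inl hr.ne'))) (Or.inl (by simpa using rpow_pos_of_pos hr d))
  refine le_of_tendsto hlim ?_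
  filter_upwards [hlin.eventually (lt_mem_nhds hr), self_mem_nhdsWithin] with s hs hts
  rw [← hausdorffMeasure_stdSimplex_inter_forall_le hd.le S (ht.trans hts.out.le) hs]
  exact measure_mono fun y ⟨hy, hyS⟩ => ⟨hy, fun i hi => hts.out.trans_le (hyS i hi)⟩

end Simplex

section FinSimplex

variable (m : ℕ)

lemma lipschitzWith_snoc_one_sub_sum :
    LipschitzWith (m + 1) fun u : Fin m → ℝ => (Fin.snoc u (1 - ∑ j, u j) : Fin (m + 1) → ℝ) := by
  refine LipschitzWith.of_dist_le_mul fun u v => (dist_pi_le_iff (by positivity)).2 fun k => ?_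
  push_cast
  refine Fin.lastCases ?_ (fun j => ?_) k
  · simp only [Fin.snoc_last, Real.dist_eq, sub_sub_sub_cancel_left, ← sum_sub_distrib]
    calc |∑ j, (v j - u j)| ≤ ∑ j, |v j - u j| := abs_sum_le_sum_abs _ _
      _ ≤ ∑ _j : Fin m, dist u v := sum_le_sum fun j _ => by
          rw [abs_sub_comm, ← Real.dist_eq]; exact dist_le_pi_dist u v j
      _ ≤ (m + 1) * dist u v := by
          rw [sum_const, card_univ, Fintype.card_fin, nsmul_eq_mul]
          exact mul_le_mul_of_nonneg_right (by linarith) dist_nonneg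
  · simp only [Fin.snoc_castSucc]
    exact (dist_le_pi_dist u v j).trans (le_mul_of_one_le_left dist_nonneg (by linarith))

lemma lipschitzWith_init : LipschitzWith 1 (Fin.init : (Fin (m + 1) → ℝ) → Fin m → ℝ) :=
  LipschitzWith.of_dist_le_mul fun y z => by
    rw [NNReal.coe_one, one_mul]
    exact (dist_pi_le_iff dist_nonneg).2 fun j => dist_le_pi_dist y z j.castSucc

lemma stdSimplex_subset_image_snoc :
    stdSimplex ℝ (Fin (m + 1)) ⊆
      (fun u : Fin m → ℝ => (Fin.snoc u (1 - ∑ j, u j) : Fin (m + 1) → ℝ)) '' Set.Icc 0 1 := by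
  intro y hy
  refine ⟨Fin.init y, ⟨fun j => (mem_Icc_of_mem_stdSimplex hy _).1,
    fun j => (mem_Icc_of_mem_stdSimplex hy _).2⟩, ?_⟩
  conv_rhs => rw [← Fin.snoc_init_self y]
  rw [← hy.2, Fin.sum_univ_castSucc]
  simp [Fin.init]

lemma pi_Icc_subset_image_init :
    Set.univ.pi (fun _ => Set.Icc (0 : ℝ) (1 / (m + 1))) ⊆
      (Fin.init : (Fin (m + 1) → ℝ) → Fin m → ℝ) '' stdSimplex ℝ (Fin (m + 1)) := by
  intro u hu
  simp only [Set.mem_pi, Set.mem_univ, Set.mem_Icc, forall_const] at hu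
  have hsum : ∑ j, u j ≤ 1 := calc
    ∑ j, u j ≤ ∑ _j : Fin m, 1 / ((m : ℝ) + 1) := sum_le_sum fun j _ => (hu j).2
    _ ≤ 1 := by
      rw [sum_const, card_univ, Fintype.card_fin, nsmul_eq_mul, mul_one_div,
        div_le_one (by positivity)]
      linarith
  refine ⟨Fin.snoc u (1 - ∑ j, u j), ⟨fun k => ?_, ?_⟩, Fin.init_snoc _ _⟩
  · refine Fin.lastCases ?_ (fun j => ?_) k
    · simpa using hsum
    · simpa using (hu j).1
  · simp [Fin.sum_univ_castSucc]

lemma hausdorffMeasure_fin_eq_volume : (μH[m] : Measure (Fin m → ℝ)) = volume := by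
  simpa using hausdorffMeasure_pi_real (ι := Fin m)

lemma hausdorffMeasure_stdSimplex_ne_top : μH[m] (stdSimplex ℝ (Fin (m + 1))) ≠ ∞ := by
  have hvol : μH[m] (Set.Icc (0 : Fin m → ℝ) 1) ≠ ∞ := by
    rw [hausdorffMeasure_fin_eq_volume]
    exact measure_Icc_lt_top.ne
  refine ne_top_of_le_ne_top ?_ ((measure_mono (stdSimplex_subset_image_snoc m)).trans
    ((lipschitzWith_snoc_one_sub_sum m).hausdorffMeasure_image_le (Nat.cast_nonneg m) _))
  exact ENNReal.mul_ne_top (by simp) hvol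

lemma hausdorffMeasure_stdSimplex_ne_zero : μH[m] (stdSimplex ℝ (Fin (m + 1))) ≠ 0 := by
  have hvol : μH[m] (Set.univ.pi fun _ : Fin m => Set.Icc (0 : ℝ) (1 / (m + 1))) ≠ 0 := by
    rw [hausdorffMeasure_fin_eq_volume, volume_pi_pi]
    simp [(by positivity : (0 : ℝ) < m + 1).not_ge]
  refine fun h => hvol (le_antisymm ?_ zero_le)
  calc _ ≤ _ := measure_mono (pi_Icc_subset_image_init m)
    _ ≤ _ := (lipschitzWith_init m).hausdorffMeasure_image_le (Nat.cast_nonneg m) _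
    _ = 0 := by rw [h, mul_zero]

end FinSimplex

lemma simplexUniform_succ (m : ℕ) :
    simplexUniform (m + 1) = (μH[m] (stdSimplex ℝ (Fin (m + 1))))⁻¹ •
      (μH[m]).restrict (stdSimplex ℝ (Fin (m + 1))) := by
  rw [simplexUniform, Nat.cast_succ, add_sub_cancel_right]
  rfl

instance isProbabilityMeasure_simplexUniform_succ (m : ℕ) :
    IsProbabilityMeasure (simplexUniform (m + 1)) := by
  constructor
  rw [simplexUniform_succ, Measure.smul_apply, Measure.restrict_apply_univ, smul_eq_mul,
    ENNReal.inv_mul_cancel (hausdorffMeasure_stdSimplex_ne_zero m)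
      (hausdorffMeasure_stdSimplex_ne_top m)]

lemma simplexUniform_real_forall_lt {m : ℕ} (hm : m ≠ 0) (S : Finset (Fin (m + 1))) {t : ℝ}
    (ht : 0 ≤ t) :
    (simplexUniform (m + 1)).real {y | ∀ i ∈ S, t < y i} = max (1 - #S * t) 0 ^ m := by
  rw [measureReal_def, simplexUniform_succ, Measure.smul_apply,
    Measure.restrict_apply (by measurability), Set.inter_comm,
    hausdorffMeasure_stdSimplex_inter_forall_lt (by positivity) S ht, smul_eq_mul, mul_comm,
    mul_assoc, ENNReal.mul_inv_cancel (hausdorffMeasure_stdSimplex_ne_zero m)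
      (hausdorffMeasure_stdSimplex_ne_top m), mul_one, ENNReal.toReal_ofReal (by positivity),
    rpow_natCast]

lemma one_sub_sum_powerset_nonempty {ι : Type*} (s : Finset ι) {g : ℕ → ℝ} (hg : g 0 = 1) :
    1 - ∑ u ∈ s.powerset with u.Nonempty, (-1 : ℝ) ^ (#u + 1) * g #u =
      ∑ k ∈ range (#s + 1), (-1 : ℝ) ^ k * (#s).choose k * g k := by
  have hempty : {u ∈ s.powerset | ¬u.Nonempty} = {∅} := by
    ext u
    constructor <;> simp +contextual [not_nonempty_iff_eq_empty]
  have hsplit := sum_filter_add_sum_filter_not s.powerset (·.Nonempty)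
    fun u => (-1 : ℝ) ^ #u * g #u
  rw [hempty, sum_singleton, card_empty, hg, pow_zero, mul_one,
    sum_powerset_apply_card fun k => (-1 : ℝ) ^ k * g k] at hsplit
  simp only [pow_succ, mul_neg_one, neg_mul, sum_neg_distrib, sub_neg_eq_add]
  rw [add_comm, hsplit]
  refine sum_congr rfl fun k _ => ?_
  rw [nsmul_eq_mul]
  ring

theorem simplexUniform_real_forall_le {m : ℕ} (hm : m ≠ 0) {t : ℝ} (ht : 0 ≤ t) :
    (simplexUniform (m + 1)).real {y | ∀ i, y i ≤ t} =
      ∑ k ∈ range (m + 2), (-1 : ℝ) ^ k * (m + 1).choose k * max (1 - k * t) 0 ^ m := by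
  have hcompl : {y : Fin (m + 1) → ℝ | ∀ i, y i ≤ t} =
      (⋃ i ∈ (univ : Finset (Fin (m + 1))), {y | t < y i})ᶜ := by
    ext; simp
  have hinter (u : Finset (Fin (m + 1))) :
      ⋂ i ∈ u, {y : Fin (m + 1) → ℝ | t < y i} = {y | ∀ i ∈ u, t < y i} := by
    ext; simp
  have hmeas (i : Fin (m + 1)) : MeasurableSet {y : Fin (m + 1) → ℝ | t < y i} :=
    measurableSet_lt measurable_const (measurable_pi_apply i)
  rw [hcompl, measureReal_compl (Finset.measurableSet_biUnion _ fun i _ => hmeas i),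
    probReal_univ, measureReal_biUnion_eq_sum_powerset fun i _ => hmeas i]
  simp_rw [hinter, simplexUniform_real_forall_lt hm _ ht]
  simpa using one_sub_sum_powerset_nonempty (univ : Finset (Fin (m + 1)))
    (g := fun k => max (1 - k * t) 0 ^ m) (by simp)

section Asymptotics

variable (x : ℝ)

lemma tendsto_add_log_pow_div_atTop (p : ℕ) :
    Tendsto (fun n : ℕ => (x + log n) ^ p / n) atTop (𝓝 0) := by
  have h := (tendsto_pow_log_div_mul_add_atTop (exp (-x)) 0 p (exp_pos _).ne').comp
    ((tendsto_id.const_mul_atTop (exp_pos x)).comp (tendsto_natCast_atTop_atTop (R := ℝ)))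
  refine h.congr' ?_
  filter_upwards [eventually_gt_atTop 0] with n hn
  have hn : (n : ℝ) ≠ 0 := by positivity
  simp only [Function.comp_apply, id, log_mul (exp_pos x).ne' hn, log_exp, add_zero,
    ← mul_assoc, ← exp_add, neg_add_cancel, exp_zero, one_mul]

lemma abs_add_log_one_sub_le {u : ℝ} (hu : |u| ≤ 1 / 2) : |u + log (1 - u)| ≤ 2 * u ^ 2 := by
  have h := abs_log_sub_add_sum_range_le (show |u| < 1 by linarith) 1
  simp only [range_one, sum_singleton, pow_one, Nat.cast_zero, zero_add, div_one,
    Nat.reduceAdd] at h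
  refine h.trans ?_
  rw [div_le_iff₀ (by linarith), ← sq_abs u]
  nlinarith [mul_nonneg (sq_nonneg |u|) (by linarith : (0 : ℝ) ≤ 1 / 2 - |u|)]

lemma eventually_one_sub_mul_add_log_div_pos (k : ℕ) :
    ∀ᶠ n : ℕ in atTop, 0 < 1 - k * ((x + log n) / n) := by
  have := ((tendsto_add_log_pow_div_atTop x 1).const_mul (k : ℝ)).const_sub 1
  simpa using this.eventually_const_lt (by norm_num : (0 : ℝ) < 1 - k * 0)

/- With `u = k (x + log n) / n` one has `(n - 1) log (1 - u) = -k (x + log n) + u + R` where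
`|R| ≤ 2 n u²`, and `n u² = k² (x + log n)² / n → 0`. -/
lemma tendsto_mul_log_add_mul_log_one_sub (k : ℕ) :
    Tendsto (fun n : ℕ => k * log n + (n - 1 : ℝ) * log (1 - k * ((x + log n) / n)))
      atTop (𝓝 (-(k * x))) := by
  set u : ℕ → ℝ := fun n => k * ((x + log n) / n)
  have hu : Tendsto u atTop (𝓝 0) := by
    simpa [u] using (tendsto_add_log_pow_div_atTop x 1).const_mul (k : ℝ)
  have hrem : Tendsto (fun n : ℕ => (n - 1 : ℝ) * (u n + log (1 - u n))) atTop (𝓝 0) := by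
    have hbound : Tendsto (fun n : ℕ => 2 * k ^ 2 * ((x + log n) ^ 2 / n)) atTop (𝓝 0) := by
      simpa using (tendsto_add_log_pow_div_atTop x 2).const_mul (2 * (k : ℝ) ^ 2)
    refine squeeze_zero_norm' ?_ hbound
    have hsmall : ∀ᶠ n in atTop, |u n| ≤ 1 / 2 := by
      have := hu.abs
      rw [abs_zero] at this
      exact this.eventually_le_const (by norm_num)
    filter_upwards [hsmall, eventually_ge_atTop 1] with n hun hn
    have hn : (1 : ℝ) ≤ n := by exact_mod_cast hn
    calc ‖(n - 1 : ℝ) * (u n + log (1 - u n))‖ ≤ (n - 1 : ℝ) * (2 * u n ^ 2) := by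
          rw [norm_mul, Real.norm_of_nonneg (by linarith)]
          gcongr
          exact abs_add_log_one_sub_le hun
      _ ≤ n * (2 * u n ^ 2) := by gcongr; linarith
      _ = 2 * k ^ 2 * ((x + log n) ^ 2 / n) := by simp only [u]; field_simp
  have := (hu.add hrem).const_add (-(k * x))
  rw [add_zero, add_zero] at this
  refine this.congr' ?_
  filter_upwards [eventually_gt_atTop 0] with n hn
  have hn : (n : ℝ) ≠ 0 := by positivity
  simp only [u]
  field_simp
  ring

lemma tendsto_pow_mul_one_sub_pow (k : ℕ) :
    Tendsto (fun n : ℕ => (n : ℝ) ^ k * (1 - k * ((x + log n) / n)) ^ (n - 1))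
      atTop (𝓝 (exp (-(k * x)))) := by
  refine ((continuous_exp.tendsto _).comp (tendsto_mul_log_add_mul_log_one_sub x k)).congr' ?_
  filter_upwards [eventually_one_sub_mul_add_log_div_pos x k, eventually_gt_atTop 0]
    with n hpos hn
  rw [Function.comp_apply, exp_add, ← Nat.cast_pred hn, exp_nat_mul, exp_nat_mul,
    exp_log (by positivity), exp_log hpos]

lemma tendsto_choose_mul_max_one_sub_pow (k : ℕ) :
    Tendsto (fun n : ℕ => n.choose k * max (1 - k * ((x + log n) / n)) 0 ^ (n - 1))
      atTop (𝓝 (exp (-(k * x)) / k.factorial)) := by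
  have hequiv := (isEquivalent_choose k).mul (Asymptotics.IsEquivalent.refl
    (u := fun n : ℕ => max (1 - k * ((x + log n) / n)) 0 ^ (n - 1)))
  refine hequiv.symm.tendsto_nhds ?_
  refine ((tendsto_pow_mul_one_sub_pow x k).div_const _).congr' ?_
  filter_upwards [eventually_one_sub_mul_add_log_div_pos x k] with n hn
  simp only [max_eq_left hn.le, Pi.mul_apply]
  ring

lemma choose_mul_max_one_sub_pow_le {n : ℕ} (hn : 1 ≤ n) (k : ℕ) :
    n.choose k * max (1 - k * ((x + log n) / n)) 0 ^ (n - 1) ≤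
      exp (2 * |x| + 1) ^ k / k.factorial := by
  set u := k * ((x + log n) / n)
  have hn0 : (0 : ℝ) < n := by exact_mod_cast hn
  have hu : u ≤ k * (|x| + 1) := by
    refine mul_le_mul_of_nonneg_left ?_ (Nat.cast_nonneg k)
    rw [div_le_iff₀ hn0]
    have : (1 : ℝ) ≤ n := by exact_mod_cast hn
    nlinarith [le_abs_self x, abs_nonneg x, log_le_sub_one_of_pos hn0]
  have hexponent : k * log n + (n - 1 : ℝ) * -u ≤ k * (2 * |x| + 1) := by
    have : (n : ℝ) * u = k * (x + log n) := by simp only [u]; field_simp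
    nlinarith [neg_abs_le x, (Nat.cast_nonneg k : (0 : ℝ) ≤ k)]
  calc n.choose k * max (1 - u) 0 ^ (n - 1)
      ≤ (n ^ k / k.factorial) * exp (-u) ^ (n - 1) := by
        gcongr
        · exact Nat.choose_le_pow_div k n
        · exact max_le (by linarith [add_one_le_exp (-u)]) (exp_pos _).le
    _ = exp (k * log n + (n - 1 : ℝ) * -u) / k.factorial := by
        rw [exp_add, ← Nat.cast_pred hn, exp_nat_mul, exp_nat_mul, exp_log hn0]
        ring
    _ ≤ exp (2 * |x| + 1) ^ k / k.factorial := by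
        rw [← exp_nat_mul]
        gcongr

theorem tendsto_sum_range_neg_one_pow_mul_choose_mul_max_pow :
    Tendsto (fun n : ℕ => ∑ k ∈ range (n + 1),
        (-1 : ℝ) ^ k * n.choose k * max (1 - k * ((x + log n) / n)) 0 ^ (n - 1))
      atTop (𝓝 (exp (-exp (-x)))) := by
  have hexp : ∑' k : ℕ, (-1 : ℝ) ^ k * (exp (-(k * x)) / k.factorial) = exp (-exp (-x)) := by
    have hs := NormedSpace.expSeries_div_hasSum_exp (-exp (-x))
    rw [← exp_eq_exp_ℝ] at hs
    refine (tsum_congr fun k => ?_).trans hs.tsum_eq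
    rw [neg_pow (exp (-x)), ← exp_nat_mul, mul_neg, mul_div_assoc]
  have hbound : ∀ᶠ n : ℕ in atTop, ∀ k,
      ‖(-1 : ℝ) ^ k * (n.choose k * max (1 - k * ((x + log n) / n)) 0 ^ (n - 1))‖ ≤
        exp (2 * |x| + 1) ^ k / k.factorial := by
    filter_upwards [eventually_ge_atTop 1] with n hn k
    rw [norm_mul, norm_pow, norm_neg, norm_one, one_pow, one_mul,
      Real.norm_of_nonneg (by positivity)]
    exact choose_mul_max_one_sub_pow_le x hn k
  have hlim := tendsto_tsum_of_dominated_convergence (Real.summable_pow_div_factorial _)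
    (fun k => (tendsto_choose_mul_max_one_sub_pow x k).const_mul ((-1 : ℝ) ^ k)) hbound
  rw [hexp] at hlim
  refine hlim.congr fun n => (tsum_eq_sum fun k hk => ?_).trans (sum_congr rfl fun k _ => ?_)
  · rw [Nat.choose_eq_zero_of_lt (by simpa [Nat.lt_succ_iff] using hk)]
    simp
  · ring

end Asymptotics

lemma setOf_mul_iSup_le_eq {ι : Type*} [Finite ι] [Nonempty ι] {c : ℝ} (hc : 0 < c) (a : ℝ) :
    {y : ι → ℝ | c * ⨆ i, y i ≤ a} = {y | ∀ i, y i ≤ a / c} := by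
  ext y
  simp only [Set.mem_ofPred_eq, ← le_div_iff₀' hc, ciSup_le_iff (Set.finite_range y).bddAbove]

/-- Gumbel limit for the maximum coordinate of a uniform point on the unit simplex:
`P[n·max_i X_i ≤ x + ln n] → exp(-e^{-x})` as `n → ∞`. -/
theorem stmt_8 (x : ℝ) :
    Filter.Tendsto
      (fun n : ℕ =>
        ((simplexUniform n) {y : Fin n → ℝ | (n : ℝ) * (⨆ i, y i) ≤ x + Real.log n}).toReal)
      Filter.atTop (nhds (Real.exp (-Real.exp (-x)))) := by
  refine (tendsto_sum_range_neg_one_pow_mul_choose_mul_max_pow x).congr' ?_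
  filter_upwards [eventually_ge_atTop 2,
    (tendsto_log_atTop.comp tendsto_natCast_atTop_atTop).eventually_ge_atTop (-x)] with n hn hlog
  have ht : 0 ≤ (x + log n) / n := div_nonneg (by rw [Function.comp_apply] at hlog; linarith)
    (by positivity)
  obtain ⟨m, rfl⟩ : ∃ m, n = m + 1 := ⟨n - 1, by omega⟩
  rw [setOf_mul_iSup_le_eq (by positivity), ← measureReal_def,
    simplexUniform_real_forall_le (by omega) ht, Nat.add_sub_cancel]
end

section
/- Let X be uniformly distributed on the discrete simplex Δ^n_m = {l ∈ Z_{≥0}^n : |l| = m} and let N = ∑_{i=1}^n 1{X_i > t} for a threshold t ≥ 0. Then E[N^2] = E[N] + n(n−1)·P[X_1 > t, X_2 > t], and hence P[max_i X_i > t] ≥ 2 − 1/E[N] − ((n−1)/n)·P[X_1 > t, X_2 > t] / (P[X_1 > t])^2, provided E[N] > 0. -/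
/-!
Write `N = ∑ᵢ 1{Xᵢ > t}`; expanding the square gives `E[N²] = ∑ᵢ,ⱼ P[Xᵢ > t, Xⱼ > t]`.
The uniform law on the simplex is invariant under permutations of the coordinates, so the
diagonal terms sum to `E[N] = n P[X₁ > t]` and the `n(n-1)` off-diagonal terms all equal
`P[X₁ > t, X₂ > t]`. For the bound, `N` vanishes off `{max Xᵢ > t}`, so Cauchy–Schwarz gives
`E[N]² ≤ E[N²] P[max Xᵢ > t]`, and `1/x ≥ 2 - x` for `x = E[N²]/E[N]²`.
-/

open MeasureTheory ProbabilityTheory Finset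
open scoped ENNReal

theorem Finset.sum_sum_eq_sum_diag_add_of_ne {ι R : Type*} [Fintype ι] [DecidableEq ι]
    [CommRing R] {g : ι → ι → R} {q : R} (hg : ∀ i j, i ≠ j → g i j = q) :
    ∑ i, ∑ j, g i j = ∑ i, g i i + Fintype.card ι * (Fintype.card ι - 1) * q := by
  have hrow : ∀ i, ∑ j, g i j = g i i + (Fintype.card ι - 1) * q := fun i => by
    rw [← add_sum_erase _ _ (mem_univ i),
      sum_congr rfl fun j hj => hg i j (ne_of_mem_erase hj).symm, sum_const,
      card_erase_of_mem (mem_univ i), card_univ, nsmul_eq_mul,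
      Nat.cast_pred (Fintype.card_pos_iff.2 ⟨i⟩)]
  simp only [hrow, sum_add_distrib, sum_const, card_univ, nsmul_eq_mul, mul_assoc]

theorem two_sub_div_sq_le_of_sq_le_mul {a b r : ℝ} (ha : a ≠ 0) (hr : 0 ≤ r)
    (h : a ^ 2 ≤ b * r) : 2 - b / a ^ 2 ≤ r := by
  have ha2 : 0 < a ^ 2 := by positivity
  set x := b / a ^ 2 with hx
  have hb : b = x * a ^ 2 := by rw [hx]; field_simp
  have hxr : 1 ≤ x * r := by
    rw [hb] at h; nlinarith
  have hx0 : 0 < x := by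
    by_contra! h0; nlinarith
  nlinarith [sq_nonneg (x - 1)]

section SecondMoment

variable {Ω ι : Type*}

section Counting

variable [Fintype ι] (P : Ω → ι → Prop) [∀ ω, DecidablePred (P ω)]

theorem card_filter_eq_sum_indicator (ω : Ω) :
    (#{i | P ω i} : ℝ) = ∑ i, {ω | P ω i}.indicator 1 ω := by
  rw [card_filter, Nat.cast_sum]
  refine sum_congr rfl fun i _ => ?_
  by_cases h : P ω i <;> simp [h]

theorem card_filter_sq_eq_sum_indicator_inter (ω : Ω) :
    (#{i | P ω i} : ℝ) ^ 2 = ∑ i, ∑ j, ({ω | P ω i} ∩ {ω | P ω j}).indicator 1 ω := by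
  simp only [card_filter_eq_sum_indicator, sq, sum_mul_sum, Set.inter_indicator_one,
    Pi.mul_apply]

end Counting

variable [MeasurableSpace Ω] {μ : Measure Ω} [IsFiniteMeasure μ]

theorem sq_integral_le_integral_sq_mul_measureReal {f : Ω → ℝ} {s : Set Ω}
    (hs : MeasurableSet s) (hf : MemLp f 2 μ) (hfs : ∀ ω ∉ s, f ω = 0) :
    (∫ ω, f ω ∂μ) ^ 2 ≤ (∫ ω, f ω ^ 2 ∂μ) * μ.real s := by
  have hf1 : Integrable f μ := hf.integrable one_le_two
  have hf2 : Integrable (fun ω => f ω ^ 2) μ := hf.integrable_sq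
  have h1s : Integrable (s.indicator 1) μ := (integrable_const (1 : ℝ)).indicator hs
  -- `x ↦ ∫ (x f - 1_s)²` is a nonnegative quadratic, so its discriminant is nonpositive
  have hquad : ∀ x : ℝ,
      0 ≤ (∫ ω, f ω ^ 2 ∂μ) * (x * x) + (-2 * ∫ ω, f ω ∂μ) * x + μ.real s := by
    intro x
    have hpt : ∀ ω, 0 ≤ x ^ 2 * f ω ^ 2 - 2 * x * f ω + s.indicator 1 ω := by
      intro ω
      by_cases hω : ω ∈ s
      · simp only [Set.indicator_of_mem hω, Pi.one_apply]
        nlinarith [sq_nonneg (x * f ω - 1)]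
      · simp [Set.indicator_of_notMem hω, hfs ω hω]
    have : 0 ≤ ∫ ω, (x ^ 2 * f ω ^ 2 - 2 * x * f ω + s.indicator 1 ω) ∂μ := integral_nonneg hpt
    rw [integral_add (f := fun ω => x ^ 2 * f ω ^ 2 - 2 * x * f ω)
        ((hf2.const_mul _).sub (hf1.const_mul _)) h1s,
      integral_sub (hf2.const_mul _) (hf1.const_mul _), integral_const_mul, integral_const_mul,
      integral_indicator_one hs] at this
    linarith
  have := discrim_le_zero hquad
  rw [discrim] at this
  linarith

variable [Fintype ι] {P : Ω → ι → Prop} [∀ ω, DecidablePred (P ω)]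
  (hP : ∀ i, MeasurableSet {ω | P ω i})
include hP

theorem memLp_card_filter (p : ℝ≥0∞) : MemLp (fun ω => (#{i | P ω i} : ℝ)) p μ := by
  simp only [card_filter_eq_sum_indicator]
  exact memLp_finsetSum _ fun i _ => (memLp_const (μ := μ) (1 : ℝ)).indicator (hP i)

theorem integral_card_filter : ∫ ω, (#{i | P ω i} : ℝ) ∂μ = ∑ i, μ.real {ω | P ω i} := by
  simp only [card_filter_eq_sum_indicator]
  rw [integral_finsetSum _ fun i _ => (integrable_const 1).indicator (hP i)]
  exact sum_congr rfl fun i _ => integral_indicator_one (hP i)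

theorem integral_card_filter_sq :
    ∫ ω, (#{i | P ω i} : ℝ) ^ 2 ∂μ = ∑ i, ∑ j, μ.real ({ω | P ω i} ∩ {ω | P ω j}) := by
  have hPP : ∀ i j, MeasurableSet ({ω | P ω i} ∩ {ω | P ω j}) := fun i j => (hP i).inter (hP j)
  simp only [card_filter_sq_eq_sum_indicator_inter]
  rw [integral_finsetSum _ fun i _ =>
    integrable_finsetSum _ fun j _ => (integrable_const 1).indicator (hPP i j)]
  refine sum_congr rfl fun i _ => ?_
  rw [integral_finsetSum _ fun j _ => (integrable_const 1).indicator (hPP i j)]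
  exact sum_congr rfl fun j _ => integral_indicator_one (hPP i j)

theorem integral_card_filter_of_measureReal_eq {p : ℝ} (hp : ∀ i, μ.real {ω | P ω i} = p) :
    ∫ ω, (#{i | P ω i} : ℝ) ∂μ = Fintype.card ι * p := by
  simp [integral_card_filter hP, hp]

theorem integral_card_filter_sq_of_measureReal_inter_eq [DecidableEq ι] {q : ℝ}
    (hq : ∀ i j, i ≠ j → μ.real ({ω | P ω i} ∩ {ω | P ω j}) = q) :
    ∫ ω, (#{i | P ω i} : ℝ) ^ 2 ∂μ
      = ∫ ω, (#{i | P ω i} : ℝ) ∂μ + Fintype.card ι * (Fintype.card ι - 1) * q := by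
  rw [integral_card_filter_sq hP, Finset.sum_sum_eq_sum_diag_add_of_ne hq, integral_card_filter hP]
  simp only [Set.inter_self]

theorem two_sub_integral_card_filter_sq_div_le (hpos : 0 < ∫ ω, (#{i | P ω i} : ℝ) ∂μ) :
    2 - (∫ ω, (#{i | P ω i} : ℝ) ^ 2 ∂μ) / (∫ ω, (#{i | P ω i} : ℝ) ∂μ) ^ 2
      ≤ μ.real {ω | ∃ i, P ω i} := by
  refine two_sub_div_sq_le_of_sq_le_mul hpos.ne' measureReal_nonneg ?_
  refine sq_integral_le_integral_sq_mul_measureReal ?_ (memLp_card_filter hP 2) fun ω hω => ?_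
  · simpa only [Set.ofPred_exists] using MeasurableSet.iUnion hP
  · simp_all

end SecondMoment

theorem Equiv.Perm.exists_apply_eq_and_apply_eq {ι : Type*} [DecidableEq ι] {i j i' j' : ι}
    (hij : i ≠ j) (hij' : i' ≠ j') : ∃ σ : Equiv.Perm ι, σ i = i' ∧ σ j = j' := by
  set k := Equiv.swap i i' j
  have hk : i' ≠ k := fun h => hij ((Equiv.swap i i').injective (by simpa [k] using h))
  exact ⟨Equiv.swap k j' * Equiv.swap i i', by simp [Equiv.swap_apply_of_ne_of_ne hk hij'],
    by simp [k]⟩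

section Exchangeable

variable {Ω ι β : Type*} [MeasurableSpace Ω] [MeasurableSpace β] {μ : Measure Ω}
  {X : Ω → ι → β} (hX : Measurable X)
  (hexch : ∀ σ : Equiv.Perm ι, μ.map (fun ω => X ω ∘ σ) = μ.map X)
include hX hexch

theorem measure_comp_perm_mem (σ : Equiv.Perm ι) {s : Set (ι → β)} (hs : MeasurableSet s) :
    μ {ω | X ω ∘ σ ∈ s} = μ {ω | X ω ∈ s} := by
  have hXσ : Measurable fun ω => X ω ∘ σ :=
    measurable_pi_lambda _ fun i => (measurable_pi_apply (σ i)).comp hX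
  have := congrArg (· s) (hexch σ)
  rwa [Measure.map_apply hXσ hs, Measure.map_apply hX hs] at this

theorem measure_apply_mem_eq (i j : ι) {s : Set β} (hs : MeasurableSet s) :
    μ {ω | X ω i ∈ s} = μ {ω | X ω j ∈ s} := by
  classical
  simpa using measure_comp_perm_mem hX hexch (Equiv.swap i j) (measurable_pi_apply j hs)

theorem measure_apply_mem_and_apply_mem_eq {i j i' j' : ι} (hij : i ≠ j) (hij' : i' ≠ j')
    {s t : Set β} (hs : MeasurableSet s) (ht : MeasurableSet t) :
    μ {ω | X ω i ∈ s ∧ X ω j ∈ t} = μ {ω | X ω i' ∈ s ∧ X ω j' ∈ t} := by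
  classical
  obtain ⟨σ, hσi, hσj⟩ := Equiv.Perm.exists_apply_eq_and_apply_eq hij hij'
  have := measure_comp_perm_mem hX hexch σ
    ((measurable_pi_apply i hs).inter (measurable_pi_apply j ht))
  simpa [hσi, hσj] using this.symm

end Exchangeable

section UniformSimplex

variable {Ω : Type*} [MeasurableSpace Ω] {μ : Measure Ω} [IsProbabilityMeasure μ] {n m : ℕ}
  {X : Ω → Fin n → ℕ} (hX : Measurable X) (hsupp : μ {ω | ∑ i, X ω i = m} = 1)
include hX hsupp

theorem measure_eq_eq_zero_of_sum_ne {l : Fin n → ℕ} (hl : ∑ i, l i ≠ m) :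
    μ {ω | X ω = l} = 0 := by
  have hmeas : MeasurableSet {ω | ∑ i, X ω i = m} :=
    hX (MeasurableSet.of_discrete (s := {l : Fin n → ℕ | ∑ i, l i = m}))
  refine measure_mono_null (fun ω (hω : X ω = l) => ?_) ((prob_compl_eq_zero_iff hmeas).2 hsupp)
  simpa [hω] using hl

theorem map_comp_perm_eq_map_of_uniform {c : ℝ≥0∞}
    (hunif : ∀ l : Fin n → ℕ, ∑ i, l i = m → μ {ω | X ω = l} = c) (σ : Equiv.Perm (Fin n)) :
    μ.map (fun ω => X ω ∘ σ) = μ.map X := by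
  have hXσ : Measurable fun ω => X ω ∘ σ := (measurable_of_countable (· ∘ σ)).comp hX
  refine Measure.ext_of_singleton fun l => ?_
  rw [Measure.map_apply hXσ (measurableSet_singleton l),
    Measure.map_apply hX (measurableSet_singleton l)]
  have hpre : (fun ω => X ω ∘ σ) ⁻¹' {l} = {ω | X ω = l ∘ σ.symm} := by
    ext ω; simp [Equiv.eq_comp_symm]
  have hsum : ∑ i, (l ∘ σ.symm) i = ∑ i, l i := Equiv.sum_comp σ.symm l
  rw [hpre]
  by_cases hl : ∑ i, l i = m
  · rw [hunif _ (hsum.trans hl)]; exact (hunif l hl).symm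
  · rw [measure_eq_eq_zero_of_sum_ne hX hsupp (hsum.trans_ne hl)]
    exact (measure_eq_eq_zero_of_sum_ne hX hsupp hl).symm

end UniformSimplex

/-- For `X` uniform on the discrete simplex `Δ^n_m` and `N = ∑_i 1{X_i > t}`:
`E[N²] = E[N] + n(n-1)·P[X_1 > t, X_2 > t]`, and if `E[N] > 0`, then
`P[max_i X_i > t] ≥ 2 - 1/E[N] - ((n-1)/n)·P[X_1 > t, X_2 > t]/P[X_1 > t]²`. -/
theorem stmt_17 {Ω : Type*} [MeasureSpace Ω] [IsProbabilityMeasure (ℙ : Measure Ω)]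
    (n m t : ℕ) (hn : 2 ≤ n)
    (X : Ω → Fin n → ℕ) (hmeas : Measurable X)
    (hsupp : ℙ {ω | ∑ i, X ω i = m} = 1)
    (hunif : ∀ l : Fin n → ℕ, ∑ i, l i = m →
      ℙ {ω | X ω = l} = (((n + m - 1).choose (n - 1) : ℝ≥0∞))⁻¹)
    (N : Ω → ℕ) (hN : ∀ ω, N ω = (Finset.univ.filter fun i => t < X ω i).card) :
    (∫ ω, (N ω : ℝ) ^ 2 ∂ℙ = (∫ ω, (N ω : ℝ) ∂ℙ)
        + (n : ℝ) * ((n : ℝ) - 1) *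
          (ℙ {ω | t < X ω ⟨0, by omega⟩ ∧ t < X ω ⟨1, hn⟩}).toReal) ∧
      (0 < ∫ ω, (N ω : ℝ) ∂ℙ →
        2 - 1 / (∫ ω, (N ω : ℝ) ∂ℙ)
            - ((n : ℝ) - 1) / (n : ℝ) *
              ((ℙ {ω | t < X ω ⟨0, by omega⟩ ∧ t < X ω ⟨1, hn⟩}).toReal /
                (ℙ {ω | t < X ω ⟨0, by omega⟩}).toReal ^ 2)
          ≤ (ℙ {ω | t < Finset.univ.sup (X ω)}).toReal) := by
  obtain rfl : N = fun ω => #{i | t < X ω i} := funext hN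
  clear hN
  beta_reduce
  set i₀ : Fin n := ⟨0, by omega⟩
  set i₁ : Fin n := ⟨1, hn⟩
  set p := (ℙ {ω | t < X ω i₀}).toReal
  set q := (ℙ {ω | t < X ω i₀ ∧ t < X ω i₁}).toReal
  have hexch := map_comp_perm_eq_map_of_uniform hmeas hsupp hunif
  have hA : ∀ i, MeasurableSet {ω | t < X ω i} := fun i =>
    (measurable_pi_apply i).comp hmeas measurableSet_Ioi
  have hmean : ∫ ω, (#{i | t < X ω i} : ℝ) = n * p := by
    rw [integral_card_filter_of_measureReal_eq hA (p := p) fun i =>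
      congrArg ENNReal.toReal (measure_apply_mem_eq hmeas hexch i i₀ measurableSet_Ioi),
      Fintype.card_fin]
  have hsecond := integral_card_filter_sq_of_measureReal_inter_eq hA (μ := ℙ) (q := q)
    fun i j hij => congrArg ENNReal.toReal <| measure_apply_mem_and_apply_mem_eq hmeas hexch hij
      (by simp [i₀, i₁, Fin.ext_iff]) measurableSet_Ioi measurableSet_Ioi
  rw [Fintype.card_fin] at hsecond
  refine ⟨hsecond, fun hpos => ?_⟩
  have hp : p ≠ 0 := by rintro hp; simp [hmean, hp] at hpos
  have hmax : {ω | t < univ.sup (X ω)} = {ω | ∃ i, t < X ω i} := by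
    ext ω; simp [Finset.lt_sup_iff]
  rw [hmax, ← measureReal_def]
  calc 2 - 1 / (∫ ω, (#{i | t < X ω i} : ℝ)) - ((n : ℝ) - 1) / n * (q / p ^ 2)
      = 2 - (∫ ω, (#{i | t < X ω i} : ℝ) ^ 2) / (∫ ω, (#{i | t < X ω i} : ℝ)) ^ 2 := by
        rw [hsecond, hmean]; field_simp; ring
    _ ≤ _ := two_sub_integral_card_filter_sq_div_le hA hpos
end
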